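/- arXiv:1803.06806 — 2 statements merged into one kernel-verified Lean document; each statement's English description precedes it below -/
import Mathlib

section
/- Let k, m, n be integers with k ≤ 0, m > −2k, and n ≥ m(m+1)/2. Then the number of strict partitions of n with exactly m parts and BG-rank equal to k equals the number of (−2k, m+2k)-sequences Δ with |Δ| = n − k(2k−1). -/
/-- The `i`-th entry (1-indexed) of a list of naturals, defaulting to `0`. -/
def entry (d : List ℕ) (i : ℕ) : ℕ := d.getD (i - 1) 0

/-- The alternating partial sum `∑_{i=1}^{m} (−1)^i d_i` of a list `d`. -/
def altSum (d : List ℕ) (m : ℕ) : ℤ :=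
  ∑ i ∈ Finset.Icc 1 m, (-1 : ℤ) ^ i * (entry d i : ℤ)

/-- `d = (d_1, …, d_l)` is an `(a,b)`-sequence: it is a list of positive integers with
`l ≥ b ≥ 1`, `d_i = a + i` for `1 ≤ i ≤ b`, `d_b ≥ d_{b+1} ≥ ⋯ ≥ d_l ≥ 1`, and
`∑_{i=1}^{l} (−1)^i d_i = 0`. -/
def IsABSeq (a b : ℕ) (d : List ℕ) : Prop :=
  1 ≤ b ∧ b ≤ d.length ∧
  (∀ i, 1 ≤ i → i ≤ d.length → 1 ≤ entry d i) ∧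
  (∀ i, 1 ≤ i → i ≤ b → entry d i = a + i) ∧
  (∀ i j, b ≤ i → i ≤ j → j ≤ d.length → entry d j ≤ entry d i) ∧
  altSum d d.length = 0

/-- An (ordinary) partition, recorded as a weakly decreasing list of positive parts. -/
def IsPartitionList (L : List ℕ) : Prop :=
  L.Pairwise (· ≥ ·) ∧ ∀ x ∈ L, 0 < x

/-- A strict partition: a strictly decreasing list of positive parts. -/
def IsStrictPartition (L : List ℕ) : Prop :=
  L.Pairwise (· > ·) ∧ ∀ x ∈ L, 0 < x

/-- The column sequence of the shifted Young diagram of a strict partition `L`: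
`colSeq L j = #{ i : 1 ≤ i ≤ m, i ≤ j ≤ λ_i + i − 1 }`. -/
def colSeq (L : List ℕ) (j : ℕ) : ℕ :=
  ((Finset.Icc 1 L.length).filter (fun i => i ≤ j ∧ j ≤ entry L i + i - 1)).card

/-- The BG-rank of a partition: the number of odd-indexed odd parts minus
the number of even-indexed odd parts (indices starting at 1). -/
def bgRank (L : List ℕ) : ℤ :=
  (((Finset.Icc 1 L.length).filter (fun i => Odd i ∧ Odd (entry L i))).card : ℤ) -
  (((Finset.Icc 1 L.length).filter (fun i => Even i ∧ Odd (entry L i))).card : ℤ)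

/-- `qj j n`: the number of strict partitions of `n` whose BG-rank equals `j`. -/
noncomputable def qj (j : ℤ) (n : ℕ) : ℕ :=
  Set.ncard {L : List ℕ | IsStrictPartition L ∧ L.sum = n ∧ bgRank L = j}

/-!
Read column by column, the shifted Young diagram of a strict partition `λ` with `m` parts is a
sequence `c_1, …, c_{λ_1}` with `c_j = j` for `j ≤ m` that weakly decreases from `c_m` on, and every
such sequence comes from exactly one strict partition. Both readings count the same cells, so
`∑ c_j = |λ|`; the cells of row `i` alternate in sign starting with `(-1)^i`, so
`∑ (-1)^j c_j = -r(λ)`. For `r(λ) = k = -s`, the first `2s` columns `1, 2, …, 2s` have alternating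
sum `s` and total `s(2s+1) = k(2k-1)`, and removing them leaves exactly a `(2s, m-2s)`-sequence.
-/

open Finset

theorem le_of_forall_pos_le_imp {x y : ℕ} (h : ∀ i, 0 < i → i ≤ x → i ≤ y) : x ≤ y := by
  rcases Nat.eq_zero_or_pos x with hx | hx
  · omega
  · exact h x hx le_rfl

theorem le_add_card_filter_Ioc_iff {P : ℕ → Prop} [DecidablePred P] {a N j : ℕ}
    (hP : ∀ i i', a < i → i ≤ i' → i' ≤ N → P i' → P i) (hj : a < j) (hjN : j ≤ N) :
    j ≤ a + #{i ∈ Ioc a N | P i} ↔ P j := by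
  constructor
  · intro hle
    by_contra hPj
    have hsub : {i ∈ Ioc a N | P i} ⊆ Ioo a j := fun i hi => by
      rw [mem_filter, mem_Ioc] at hi
      exact mem_Ioo.2 ⟨hi.1.1, lt_of_not_ge fun hji => hPj (hP j i hj hji hi.1.2 hi.2)⟩
    have := card_le_card hsub
    rw [Nat.card_Ioo] at this
    omega
  · intro hPj
    have hsub : Ioc a j ⊆ {i ∈ Ioc a N | P i} := fun i hi => by
      rw [mem_Ioc] at hi
      exact mem_filter.2 ⟨mem_Ioc.2 ⟨hi.1, hi.2.trans hjN⟩, hP i j hi.1 hi.2 hjN hPj⟩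
    have := card_le_card hsub
    rw [Nat.card_Ioc] at this
    omega

theorem sum_Icc_one_eq_sum_range {M : Type*} [AddCommMonoid M] (n : ℕ) (f : ℕ → M) :
    ∑ i ∈ Icc 1 n, f i = ∑ i ∈ range n, f (i + 1) := by
  rw [← Ico_add_one_right_eq_Icc, sum_Ico_eq_sum_range, Nat.add_sub_cancel]
  simp only [add_comm]

theorem sum_Ico_neg_one_pow (i t : ℕ) :
    ∑ j ∈ Ico i (t + i), (-1 : ℤ) ^ j = (-1) ^ i * if Even t then 0 else 1 := by
  rw [sum_Ico_eq_sum_range, Nat.add_sub_cancel, ← neg_one_geom_sum, mul_sum]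
  simp only [pow_add]

theorem entry_eq_getElem {L : List ℕ} {i : ℕ} (h1 : 1 ≤ i) (h2 : i ≤ L.length) :
    entry L i = L[i - 1]'(by omega) := by
  simp [entry, List.getD_eq_getElem?_getD, List.getElem?_eq_getElem (by omega : i - 1 < L.length)]

theorem entry_eq_zero {L : List ℕ} {i : ℕ} (h : L.length < i) : entry L i = 0 := by
  simp [entry, List.getD_eq_getElem?_getD, List.getElem?_eq_none (by omega : L.length ≤ i - 1)]

theorem le_length_of_pos_entry {L : List ℕ} {i : ℕ} (h : 0 < entry L i) : i ≤ L.length := by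
  by_contra hi
  rw [entry_eq_zero (by omega)] at h
  exact lt_irrefl 0 h

theorem entry_map_range (f : ℕ → ℕ) {t i : ℕ} (h1 : 1 ≤ i) (h2 : i ≤ t) :
    entry ((List.range t).map f) i = f (i - 1) := by
  rw [entry_eq_getElem h1 (by simpa using h2)]
  simp

theorem ext_entry {L L' : List ℕ} (hlen : L.length = L'.length)
    (h : ∀ i, 1 ≤ i → i ≤ L.length → entry L i = entry L' i) : L = L' := by
  refine List.ext_getElem hlen fun t h1 h2 => ?_
  have := h (t + 1) (by omega) (by omega)
  rwa [entry_eq_getElem (by omega) (by omega), entry_eq_getElem (by omega) (by omega)] at this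

theorem sum_entry (L : List ℕ) : ∑ i ∈ Icc 1 L.length, entry L i = L.sum := by
  rw [sum_Icc_one_eq_sum_range, sum_range, ← Fin.sum_univ_getElem]
  refine sum_congr rfl fun i _ => ?_
  rw [entry_eq_getElem (by omega) (by omega)]
  simp

theorem entry_range'_append {a j : ℕ} (d : List ℕ) (hj : 1 ≤ j) :
    entry (List.range' 1 a ++ d) j = if j ≤ a then j else entry d (j - a) := by
  unfold entry
  split_ifs with hja
  · rw [List.getD_append _ _ _ _ (by simp; omega), List.getD_eq_getElem _ _ (by simp; omega)]
    simp only [List.getElem_range', one_mul]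
    omega
  · rw [List.getD_append_right _ _ _ _ (by simp; omega)]
    simp only [List.length_range']
    congr 1
    omega

theorem altSum_eq_sum_range (d : List ℕ) (n : ℕ) :
    altSum d n = ∑ i ∈ range n, (-1 : ℤ) ^ (i + 1) * (d.getD i 0 : ℤ) := by
  rw [altSum, sum_Icc_one_eq_sum_range]
  simp [entry]

theorem altSum_append (l d : List ℕ) :
    altSum (l ++ d) (l.length + d.length) =
      altSum l l.length + (-1) ^ l.length * altSum d d.length := by
  simp only [altSum_eq_sum_range, sum_range_add, mul_sum]
  congr 1
  · refine sum_congr rfl fun i hi => ?_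
    rw [List.getD_append _ _ _ _ (mem_range.1 hi)]
  · refine sum_congr rfl fun i _ => ?_
    rw [List.getD_append_right _ _ _ _ (by omega), Nat.add_sub_cancel_left]
    ring

theorem altSum_range' (s : ℕ) : altSum (List.range' 1 (2 * s)) (2 * s) = s := by
  induction s with
  | zero => simp [altSum]
  | succ s ih =>
    have h := altSum_append (List.range' 1 (2 * s)) (List.range' (1 + 1 * (2 * s)) 2)
    rw [List.range'_append] at h
    simp only [List.length_range'] at h
    rw [show 2 * (s + 1) = 2 * s + 2 by ring, h, ih, pow_mul, neg_one_sq, one_pow, one_mul,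
      altSum_eq_sum_range]
    simp only [sum_range_succ, sum_range_zero, List.range', List.getD_cons_zero,
      List.getD_cons_succ]
    push_cast
    ring

theorem sum_range'_two_mul (s : ℕ) : (List.range' 1 (2 * s)).sum = s * (2 * s + 1) := by
  induction s with
  | zero => simp
  | succ s ih =>
    rw [show 2 * (s + 1) = 2 * s + 2 by ring, ← List.range'_append, List.sum_append, ih]
    simp only [List.range', List.sum_cons, List.sum_nil]
    ring

theorem neg_bgRank_eq (L : List ℕ) :
    -bgRank L = ∑ i ∈ Icc 1 L.length, ∑ j ∈ Ico i (entry L i + i), (-1 : ℤ) ^ j := by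
  simp only [sum_Ico_neg_one_pow, bgRank, card_filter]
  push_cast
  rw [neg_sub, ← sum_sub_distrib]
  refine sum_congr rfl fun i _ => ?_
  rcases Nat.even_or_odd i with hi | hi <;> rcases Nat.even_or_odd (entry L i) with he | he <;>
    simp [hi, he, hi.neg_one_pow, ← Nat.not_odd_iff_even, ← Nat.not_even_iff_odd]

theorem isStrictPartition_of_entry {L : List ℕ}
    (hpos : ∀ i, 1 ≤ i → i ≤ L.length → 1 ≤ entry L i)
    (hlt : ∀ i, 1 ≤ i → i < L.length → entry L (i + 1) < entry L i) : IsStrictPartition L := by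
  refine ⟨List.isChain_iff_pairwise.1 (List.isChain_iff_getElem.2 fun t ht => ?_), fun x hx => ?_⟩
  · have := hlt (t + 1) (by omega) ht
    rw [entry_eq_getElem (by omega) ht, entry_eq_getElem (by omega) (by omega)] at this
    simpa using this
  · obtain ⟨t, ht, rfl⟩ := List.mem_iff_getElem.1 hx
    have := hpos (t + 1) (by omega) ht
    rw [entry_eq_getElem (by omega) ht] at this
    simpa [Nat.pos_iff_ne_zero, Nat.one_le_iff_ne_zero] using this

/-- `c` lists the column lengths of the shifted diagram of `L`, whose row `i` occupies the columns
`i, …, λ_i + i - 1`: both describe the same cells `(i, j)`. -/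
def IsShiftedConj (L c : List ℕ) : Prop :=
  ∀ i j, 1 ≤ i → 1 ≤ j → (i ≤ L.length ∧ i ≤ j ∧ j < entry L i + i ↔ i ≤ entry c j)

def shiftedConj (L : List ℕ) : List ℕ :=
  (List.range (entry L 1)).map fun t => colSeq L (t + 1)

def shiftedRows (m : ℕ) (c : List ℕ) : List ℕ :=
  (List.range m).map fun t => #{j ∈ Icc 1 c.length | t + 1 ≤ entry c j}

/-- An `(a,b)`-sequence without the alternating-sum condition. For `a = 0` and `b = m` these are
the column lengths of the shifted diagrams with `m` rows. -/
def IsColumnSeq (a b : ℕ) (d : List ℕ) : Prop :=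
  1 ≤ b ∧ b ≤ d.length ∧
  (∀ i, 1 ≤ i → i ≤ d.length → 1 ≤ entry d i) ∧
  (∀ i, 1 ≤ i → i ≤ b → entry d i = a + i) ∧
  (∀ i j, b ≤ i → i ≤ j → j ≤ d.length → entry d j ≤ entry d i)

theorem isABSeq_iff {a b : ℕ} {d : List ℕ} :
    IsABSeq a b d ↔ IsColumnSeq a b d ∧ altSum d d.length = 0 := by
  simp only [IsABSeq, IsColumnSeq, and_assoc]

theorem length_shiftedConj (L : List ℕ) : (shiftedConj L).length = entry L 1 := by
  simp [shiftedConj]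

theorem entry_shiftedConj {L : List ℕ} {j : ℕ} (h1 : 1 ≤ j) (h2 : j ≤ entry L 1) :
    entry (shiftedConj L) j = colSeq L j := by
  rw [shiftedConj, entry_map_range _ h1 h2, Nat.sub_add_cancel h1]

theorem length_shiftedRows (m : ℕ) (c : List ℕ) : (shiftedRows m c).length = m := by
  simp [shiftedRows]

theorem entry_shiftedRows {m : ℕ} (c : List ℕ) {i : ℕ} (h1 : 1 ≤ i) (h2 : i ≤ m) :
    entry (shiftedRows m c) i = #{j ∈ Icc 1 c.length | i ≤ entry c j} := by
  rw [shiftedRows, entry_map_range _ h1 h2, Nat.sub_add_cancel h1]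

namespace IsShiftedConj

variable {L c : List ℕ} (h : IsShiftedConj L c)
include h

theorem entry_le_length {j : ℕ} (hj : 1 ≤ j) : entry c j ≤ L.length := by
  rcases Nat.eq_zero_or_pos (entry c j) with h0 | hpos
  · omega
  · exact ((h _ j hpos hj).2 le_rfl).1

theorem col_eq_Icc {j : ℕ} (hj : 1 ≤ j) :
    {i ∈ Icc 1 L.length | i ≤ entry c j} = Icc 1 (entry c j) := by
  have := h.entry_le_length hj
  ext i
  simp only [mem_filter, mem_Icc]
  omega

theorem row_eq_Ico {i : ℕ} (hi : 1 ≤ i) (hiL : i ≤ L.length) :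
    {j ∈ Icc 1 c.length | i ≤ entry c j} = Ico i (entry L i + i) := by
  ext j
  simp only [mem_filter, mem_Icc, mem_Ico]
  constructor
  · rintro ⟨⟨hj, -⟩, hij⟩
    exact ((h i j hi hj).2 hij).2
  · rintro ⟨hij, hjL⟩
    have hic := (h i j hi (by omega)).1 ⟨hiL, hij, hjL⟩
    exact ⟨⟨by omega, le_length_of_pos_entry (by omega)⟩, hic⟩

theorem sum_mul_entry (w : ℕ → ℤ) :
    ∑ j ∈ Icc 1 c.length, w j * entry c j =
      ∑ i ∈ Icc 1 L.length, ∑ j ∈ Ico i (entry L i + i), w j := by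
  have hcol : ∀ j ∈ Icc 1 c.length,
      w j * entry c j = ∑ i ∈ Icc 1 L.length, if i ≤ entry c j then w j else 0 := by
    intro j hj
    rw [← sum_filter, h.col_eq_Icc (mem_Icc.1 hj).1, sum_const, Nat.card_Icc, nsmul_eq_mul,
      mul_comm]
    simp
  have hrow : ∀ i ∈ Icc 1 L.length, (∑ j ∈ Icc 1 c.length, if i ≤ entry c j then w j else 0) =
      ∑ j ∈ Ico i (entry L i + i), w j := by
    intro i hi
    rw [← sum_filter, h.row_eq_Ico (mem_Icc.1 hi).1 (mem_Icc.1 hi).2]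
  rw [sum_congr rfl hcol, sum_comm, sum_congr rfl hrow]

theorem sum_eq : c.sum = L.sum := by
  have key := h.sum_mul_entry 1
  simp only [Pi.one_apply, one_mul, sum_const, Nat.card_Ico, Nat.add_sub_cancel, nsmul_eq_mul,
    mul_one] at key
  rw [← sum_entry, ← sum_entry]
  exact_mod_cast key

theorem altSum_eq : altSum c c.length = -bgRank L := by
  rw [altSum, h.sum_mul_entry, neg_bgRank_eq]

theorem shiftedRows_eq : shiftedRows L.length c = L :=
  ext_entry (length_shiftedRows _ _) fun i hi hiL => by
    rw [length_shiftedRows] at hiL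
    rw [entry_shiftedRows c hi hiL, h.row_eq_Ico hi hiL, Nat.card_Ico, Nat.add_sub_cancel]

theorem shiftedConj_eq (hc : ∀ j, 1 ≤ j → j ≤ c.length → 1 ≤ entry c j) : shiftedConj L = c := by
  have hcol : ∀ j, 0 < j → (j ≤ entry L 1 ↔ j ≤ c.length) := fun j hj => by
    rw [show j ≤ c.length ↔ 1 ≤ entry c j from ⟨hc j hj, le_length_of_pos_entry⟩,
      ← h 1 j le_rfl hj]
    rcases Nat.eq_zero_or_pos L.length with h0 | h0
    · rw [entry_eq_zero (by omega)]
      omega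
    · omega
  have hlen : entry L 1 = c.length := le_antisymm
    (le_of_forall_pos_le_imp fun j hj => (hcol j hj).1)
    (le_of_forall_pos_le_imp fun j hj => (hcol j hj).2)
  refine ext_entry (by rw [length_shiftedConj, hlen]) fun j hj hjc => ?_
  rw [length_shiftedConj] at hjc
  have hcells : {i ∈ Icc 1 L.length | i ≤ j ∧ j ≤ entry L i + i - 1} =
      {i ∈ Icc 1 L.length | i ≤ entry c j} := filter_congr fun i hi => by
    rw [mem_Icc] at hi
    rw [← h i j hi.1 hj]
    omega
  rw [entry_shiftedConj hj hjc, colSeq, hcells, h.col_eq_Icc hj, Nat.card_Icc, Nat.add_sub_cancel]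

end IsShiftedConj

namespace IsStrictPartition

variable {L : List ℕ} (hL : IsStrictPartition L)
include hL

theorem one_le_entry {i : ℕ} (h1 : 1 ≤ i) (h2 : i ≤ L.length) : 1 ≤ entry L i := by
  rw [entry_eq_getElem h1 h2]
  exact hL.2 _ (List.getElem_mem _)

theorem entry_succ_lt {i : ℕ} (h1 : 1 ≤ i) (h2 : i < L.length) : entry L (i + 1) < entry L i := by
  rw [entry_eq_getElem h1 h2.le, entry_eq_getElem (by omega) h2]
  exact List.pairwise_iff_getElem.1 hL.1 _ _ _ _ (by omega)

theorem entry_add_le {i i' : ℕ} (h1 : 1 ≤ i) (hii' : i ≤ i') (h2 : i' ≤ L.length) :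
    entry L i' + i' ≤ entry L i + i := by
  induction i', hii' using Nat.le_induction with
  | base => exact le_rfl
  | succ i' hii' ih =>
    have := hL.entry_succ_lt (by omega) (by omega : i' < L.length)
    have := ih (by omega)
    omega

theorem isShiftedConj : IsShiftedConj L (shiftedConj L) := by
  intro i j hi hj
  by_cases hj1 : j ≤ entry L 1
  · rw [entry_shiftedConj hj hj1]
    by_cases hiL : i ≤ L.length
    -- the rows meeting column `j` form an initial segment, as the row ends `λ_i + i` decrease
    · have hIcc : Icc 1 L.length = Ioc 0 L.length := Icc_add_one_left_eq_Ioc 0 _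
      have key := le_add_card_filter_Ioc_iff (P := fun i => i ≤ j ∧ j ≤ entry L i + i - 1)
        (fun i₀ i₁ h₀ h₀₁ h₁ hP => by have := hL.entry_add_le h₀ h₀₁ h₁; omega) hi hiL
      rw [zero_add] at key
      rw [colSeq, hIcc, key]
      omega
    · have : colSeq L j ≤ L.length := (card_filter_le _ _).trans (by simp)
      omega
  · rw [entry_eq_zero (L := shiftedConj L) (by rw [length_shiftedConj]; omega)]
    have := fun hiL => hL.entry_add_le le_rfl hi hiL
    omega

theorem shiftedRows_shiftedConj : shiftedRows L.length (shiftedConj L) = L :=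
  hL.isShiftedConj.shiftedRows_eq

theorem isColumnSeq (hm : 1 ≤ L.length) : IsColumnSeq 0 L.length (shiftedConj L) := by
  have hR := hL.isShiftedConj
  have hlast := hL.entry_add_le le_rfl hm le_rfl
  have hpos := hL.one_le_entry hm le_rfl
  refine ⟨hm, ?_, fun j hj hjc => ?_, fun j hj hjm => ?_, fun j j' hmj hjj' hj'c => ?_⟩
  · rw [length_shiftedConj]
    omega
  · rw [length_shiftedConj] at hjc
    exact (hR 1 j le_rfl hj).1 ⟨hm, hj, by omega⟩
  · rw [zero_add]
    refine le_antisymm (le_of_forall_pos_le_imp fun i hi hic => ((hR i j hi hj).2 hic).2.1)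
      (le_of_forall_pos_le_imp fun i hi hij => (hR i j hi hj).1 ⟨by omega, hij, ?_⟩)
    have := hL.entry_add_le hi (hij.trans hjm) le_rfl
    omega
  · refine le_of_forall_pos_le_imp fun i hi hic => ?_
    obtain ⟨hiL, -, hlt⟩ := (hR i j' hi (by omega)).2 hic
    exact (hR i j hi (by omega)).1 ⟨hiL, by omega, by omega⟩

end IsStrictPartition

namespace IsColumnSeq

variable {m : ℕ} {c : List ℕ} (hc : IsColumnSeq 0 m c)
include hc

theorem entry_le {j : ℕ} (hj : 1 ≤ j) : entry c j ≤ m := by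
  obtain ⟨hm, -, -, hinit, hanti⟩ := hc
  rcases le_or_gt j m with hjm | hjm
  · rw [hinit j hj hjm]
    omega
  rcases le_or_gt j c.length with hjc | hjc
  · have := hanti m j le_rfl hjm.le hjc
    rw [hinit m hm le_rfl] at this
    omega
  · rw [entry_eq_zero hjc]
    omega

theorem le_entry_iff {i j : ℕ} (hi : 1 ≤ i) (him : i ≤ m) (hj : 1 ≤ j) :
    i ≤ entry c j ↔ i ≤ j ∧ j ≤ m + #{j' ∈ Ioc m c.length | i ≤ entry c j'} := by
  obtain ⟨-, -, -, hinit, hanti⟩ := hc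
  rcases le_or_gt j m with hjm | hjm
  · rw [hinit j hj hjm]
    omega
  rcases le_or_gt j c.length with hjc | hjc
  · rw [le_add_card_filter_Ioc_iff
      (fun j₀ j₁ h₀ h₀₁ h₁ hP => hP.trans (hanti j₀ j₁ h₀.le h₀₁ h₁)) hjm hjc]
    omega
  · have := card_le_card (filter_subset (fun j' => i ≤ entry c j') (Ioc m c.length))
    rw [Nat.card_Ioc] at this
    rw [entry_eq_zero hjc]
    omega

theorem entry_shiftedRows_add {i : ℕ} (hi : 1 ≤ i) (him : i ≤ m) :
    entry (shiftedRows m c) i + i = m + 1 + #{j ∈ Ioc m c.length | i ≤ entry c j} := by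
  have hmc := hc.2.1
  have hsub := card_le_card (filter_subset (fun j => i ≤ entry c j) (Ioc m c.length))
  rw [Nat.card_Ioc] at hsub
  have hrow : {j ∈ Icc 1 c.length | i ≤ entry c j} =
      Icc i (m + #{j ∈ Ioc m c.length | i ≤ entry c j}) := by
    ext j
    rw [mem_filter, mem_Icc, mem_Icc]
    constructor
    · rintro ⟨⟨hj, -⟩, hij⟩
      exact (hc.le_entry_iff hi him hj).1 hij
    · rintro ⟨hij, hjt⟩
      exact ⟨⟨by omega, by omega⟩, (hc.le_entry_iff hi him (by omega)).2 ⟨hij, hjt⟩⟩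
  rw [entry_shiftedRows c hi him, hrow, Nat.card_Icc]
  omega

theorem isShiftedConj : IsShiftedConj (shiftedRows m c) c := by
  intro i j hi hj
  rw [length_shiftedRows]
  by_cases him : i ≤ m
  · rw [hc.le_entry_iff hi him hj, hc.entry_shiftedRows_add hi him]
    omega
  · have := hc.entry_le hj
    omega

theorem isStrictPartition : IsStrictPartition (shiftedRows m c) := by
  refine isStrictPartition_of_entry (fun i hi him => ?_) (fun i hi him => ?_)
  · rw [length_shiftedRows] at him
    have := hc.entry_shiftedRows_add hi him
    omega
  · rw [length_shiftedRows] at him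
    have h₁ := hc.entry_shiftedRows_add hi him.le
    have h₂ := hc.entry_shiftedRows_add (i := i + 1) (by omega) him
    have : #{j ∈ Ioc m c.length | i + 1 ≤ entry c j} ≤ #{j ∈ Ioc m c.length | i ≤ entry c j} :=
      card_le_card (monotone_filter_right _ fun j _ h => by omega)
    omega

theorem range'_append_drop {a : ℕ} (ha : a ≤ m) : List.range' 1 a ++ c.drop a = c := by
  obtain ⟨-, hmc, -, hinit, -⟩ := hc
  conv_rhs => rw [← List.take_append_drop a c]
  congr 1
  refine List.ext_getElem (by simp; omega) fun t h₁ h₂ => ?_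
  rw [List.length_range'] at h₁
  have := hinit (t + 1) (by omega) (by omega)
  rw [entry_eq_getElem (by omega) (by omega)] at this
  simp only [Nat.add_sub_cancel, zero_add] at this
  simp only [List.getElem_range', one_mul, List.getElem_take, this]
  omega

end IsColumnSeq

theorem isColumnSeq_range'_append_iff {a b : ℕ} {d : List ℕ} (hb : 1 ≤ b) :
    IsColumnSeq 0 (a + b) (List.range' 1 a ++ d) ↔ IsColumnSeq a b d := by
  have hshift : ∀ i, 1 ≤ i → entry (List.range' 1 a ++ d) (a + i) = entry d i := fun i hi => by
    rw [entry_range'_append d (by omega), if_neg (by omega), Nat.add_sub_cancel_left]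
  simp only [IsColumnSeq, List.length_append, List.length_range']
  constructor
  · rintro ⟨-, hlen, hpos, hinit, hanti⟩
    refine ⟨hb, by omega, fun i hi hid => ?_, fun i hi hib => ?_, fun i j hbi hij hjd => ?_⟩
    · rw [← hshift i hi]
      exact hpos _ (by omega) (by omega)
    · rw [← hshift i hi, hinit _ (by omega) (by omega)]
      omega
    · rw [← hshift i (by omega), ← hshift j (by omega)]
      exact hanti _ _ (by omega) (by omega) (by omega)
  · rintro ⟨-, hlen, hpos, hinit, hanti⟩
    refine ⟨by omega, by omega, fun i hi hid => ?_, fun i hi hib => ?_, fun i j hbi hij hjd => ?_⟩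
    · rw [entry_range'_append d hi]
      split_ifs
      · omega
      · exact hpos _ (by omega) (by omega)
    · rw [entry_range'_append d hi]
      split_ifs
      · omega
      · rw [hinit _ (by omega) (by omega)]
        omega
    · rw [entry_range'_append d (by omega), entry_range'_append d (by omega), if_neg (by omega),
        if_neg (by omega)]
      exact hanti _ _ (by omega) (by omega) (by omega)

namespace IsShiftedConj

variable {s b : ℕ} {L d : List ℕ} (h : IsShiftedConj L (List.range' 1 (2 * s) ++ d))
include h

theorem isABSeq_iff_bgRank (hc : IsColumnSeq 0 (2 * s + b) (List.range' 1 (2 * s) ++ d))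
    (hb : 1 ≤ b) : IsABSeq (2 * s) b d ↔ bgRank L = -s := by
  have halt := h.altSum_eq
  rw [List.length_append, altSum_append, List.length_range', altSum_range', pow_mul, neg_one_sq,
    one_pow, one_mul] at halt
  rw [isABSeq_iff, ← isColumnSeq_range'_append_iff hb]
  simp only [hc, true_and]
  omega

theorem sum_eq_add_sum : L.sum = s * (2 * s + 1) + d.sum := by
  rw [← h.sum_eq, List.sum_append, sum_range'_two_mul]

end IsShiftedConj

theorem ncard_strictPartition_eq_ncard_isABSeq (s b n : ℕ) (hb : 1 ≤ b) :
    {L : List ℕ | IsStrictPartition L ∧ L.length = 2 * s + b ∧ L.sum = n ∧ bgRank L = -s}.ncard =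
      {d : List ℕ | IsABSeq (2 * s) b d ∧ (d.sum : ℤ) = n - s * (2 * s + 1)}.ncard := by
  refine Set.ncard_congr (fun L _ => (shiftedConj L).drop (2 * s)) ?_ ?_ ?_
  · rintro L ⟨hL, hlen, hsum, hbg⟩
    have hc := hL.isColumnSeq (by omega)
    have happ := hc.range'_append_drop (a := 2 * s) (by omega)
    have hR := hL.isShiftedConj
    rw [← happ] at hR
    rw [hlen, ← happ] at hc
    refine ⟨(hR.isABSeq_iff_bgRank hc hb).2 hbg, ?_⟩
    have := hR.sum_eq_add_sum
    push_cast [← hsum, this]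
    ring
  · rintro L₁ L₂ ⟨hL₁, hlen₁, -⟩ ⟨hL₂, hlen₂, -⟩ hdrop
    have hconj : shiftedConj L₁ = shiftedConj L₂ := by
      rw [← (hL₁.isColumnSeq (by omega)).range'_append_drop (a := 2 * s) (by omega),
        ← (hL₂.isColumnSeq (by omega)).range'_append_drop (a := 2 * s) (by omega), hdrop]
    rw [← hL₁.shiftedRows_shiftedConj, ← hL₂.shiftedRows_shiftedConj, hlen₁, hlen₂, hconj]
  · rintro d ⟨hd, hsum⟩
    have hc := (isColumnSeq_range'_append_iff hb).2 (isABSeq_iff.1 hd).1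
    have hR := hc.isShiftedConj
    refine ⟨shiftedRows (2 * s + b) (List.range' 1 (2 * s) ++ d),
      ⟨hc.isStrictPartition, length_shiftedRows _ _, ?_, (hR.isABSeq_iff_bgRank hc hb).1 hd⟩, ?_⟩
    · rw [hR.sum_eq_add_sum]
      have : ((s * (2 * s + 1) + d.sum : ℕ) : ℤ) = n := by
        rw [Nat.cast_add, hsum]
        push_cast
        ring
      exact_mod_cast this
    · rw [hR.shiftedConj_eq hc.2.2.1]
      exact List.drop_left' (List.length_range' ..)

theorem strict_bg_count_case3_general (k : ℤ) (m n : ℕ) (hk : k ≤ 0) (hm : -2 * k < (m : ℤ)) :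
    Set.ncard {L : List ℕ | IsStrictPartition L ∧ L.length = m ∧ L.sum = n ∧
      bgRank L = k} =
    Set.ncard {d : List ℕ | IsABSeq (-2 * k).toNat ((m : ℤ) + 2 * k).toNat d ∧
      (d.sum : ℤ) = (n : ℤ) - k * (2 * k - 1)} := by
  obtain ⟨s, rfl⟩ : ∃ s : ℕ, k = -s := ⟨k.natAbs, by omega⟩
  obtain ⟨b, rfl⟩ : ∃ b : ℕ, m = 2 * s + b := ⟨m - 2 * s, by omega⟩
  have ha : (-2 * -(s : ℤ)).toNat = 2 * s := by omega
  have hb : (((2 * s + b : ℕ) : ℤ) + 2 * -(s : ℤ)).toNat = b := by omega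
  have hk' : -(s : ℤ) * (2 * -(s : ℤ) - 1) = s * (2 * s + 1) := by ring
  rw [ha, hb, hk', ncard_strictPartition_eq_ncard_isABSeq s b n (by omega)]

/-- Theorem 3.4(3): for `k ≤ 0`, `m > −2k`, `n ≥ m(m+1)/2`, the number of strict
partitions of `n` with exactly `m` parts and BG-rank `k` equals the number of
`(−2k, m+2k)`-sequences `Δ` with `|Δ| = n − k(2k−1)`. -/
theorem strict_bg_count_case3 (k : ℤ) (m n : ℕ) (hk : k ≤ 0) (hm : -2 * k < (m : ℤ))
    (hn : m * (m + 1) / 2 ≤ n) :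
    Set.ncard {L : List ℕ | IsStrictPartition L ∧ L.length = m ∧ L.sum = n ∧
      bgRank L = k} =
    Set.ncard {d : List ℕ | IsABSeq (-2 * k).toNat ((m : ℤ) + 2 * k).toNat d ∧
      (d.sum : ℤ) = (n : ℤ) - k * (2 * k - 1)} :=
  strict_bg_count_case3_general k m n hk hm
end

section
/- For every nonnegative integer n, the number of strict partitions of n equals the number of ordered pairs (k, μ) where k is a nonnegative integer, μ is a partition all of whose parts are even, and k(k+1)/2 + |μ| = n. That is, the number of partitions of n into distinct parts equals the number of partitions of n into even parts together with precisely one (possibly zero) triangular part. -/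
/-!
Refine the count by the largest allowed part `N` and by the BG-rank `j`: the strict partitions of
`n` with parts at most `N` and BG-rank `j` are counted by the coefficient of `q ^ (n - j (2j - 1))`
in the Gaussian binomial `[N choose ⌊N/2⌋ + j]` at `q²`. Indeed, adding a new largest part `N + 1`
turns the BG-rank of the rest into `[N + 1 odd] - j`, and after the symmetry
`[N choose c] = [N choose N - c]` the resulting recursion is one of the two `q`-Pascal rules.
For `N = 2n` the Gaussian coefficient has stabilised to the number of partitions of
`n - j (2j - 1)` into even parts, and `j ↦ j (2j - 1)` runs through the triangular numbers
`k (k + 1) / 2` exactly once as `j` ranges over `ℤ`.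
-/

open Finset

theorem Set.ncard_eq_of_ncard_fiber_eq {α β ι : Type*} {S : Set α} {T : Set β} {f : α → ι}
    {g : β → ι} (hS : ∀ i, {x ∈ S | f x = i}.Finite) (hT : ∀ i, {y ∈ T | g y = i}.Finite)
    (h : ∀ i, {x ∈ S | f x = i}.ncard = {y ∈ T | g y = i}.ncard) : S.ncard = T.ncard := by
  have fiber (i : ι) : {x : S // f x = i} ≃ {y : T // g y = i} := by
    let eS := Equiv.subtypeSubtypeEquivSubtypeInter (· ∈ S) (f · = i)
    let eT := Equiv.subtypeSubtypeEquivSubtypeInter (· ∈ T) (g · = i)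
    have : Finite {x // x ∈ S ∧ f x = i} := (hS i).to_subtype
    have : Finite {y // y ∈ T ∧ g y = i} := (hT i).to_subtype
    have : Finite {x : S // f x = i} := .of_equiv _ eS.symm
    have : Finite {y : T // g y = i} := .of_equiv _ eT.symm
    refine (Finite.card_eq.mp ?_).some
    rw [Nat.card_congr eS, Nat.card_congr eT]
    exact h i
  rw [← Nat.card_coe_set_eq, ← Nat.card_coe_set_eq]
  exact Nat.card_congr (Equiv.ofFiberEquiv fiber)

theorem List.finite_setOf_pos_sum_le (s : ℕ) :
    {L : List ℕ | (∀ x ∈ L, 0 < x) ∧ L.sum ≤ s}.Finite := by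
  refine ((List.finite_length_le (Fin (s + 1)) s).image (List.map Fin.val)).subset ?_
  rintro L ⟨hpos, hsum⟩
  have hle (x : ℕ) (hx : x ∈ L) : x < s + 1 :=
    Nat.lt_succ_of_le ((List.le_sum_of_mem hx).trans hsum)
  refine ⟨L.pmap Fin.mk hle, ?_, ?_⟩
  · simpa using (List.length_le_sum_of_one_le L hpos).trans hsum
  · simp [List.map_pmap]

theorem Finset.card_filter_Icc_one (P : ℕ → Prop) [DecidablePred P] (n : ℕ) :
    #{i ∈ Icc 1 n | P i} = #{k ∈ range n | P (k + 1)} := by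
  have : Icc 1 n = (range n).map (addRightEmbedding 1) := by
    ext i
    simp only [mem_Icc, mem_map, mem_range, addRightEmbedding_apply]
    constructor
    · intro h
      exact ⟨i - 1, by omega, by omega⟩
    · rintro ⟨k, hk, rfl⟩
      omega
  rw [this, filter_map, card_map]
  rfl

/-- The coefficient of `q ^ m` in the Gaussian binomial coefficient `[N choose c]` at `q ^ 2`,
i.e. the number of partitions of `m` into at most `N - c` even parts, each at most `2 c`. -/
def evenGaussCoeff : ℕ → ℤ → ℤ → ℕ
  | 0, c, m => if c = 0 ∧ m = 0 then 1 else 0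
  | N + 1, c, m => evenGaussCoeff N c m + evenGaussCoeff N (c - 1) (m - 2 * (N + 1 - c))

theorem evenGaussCoeff_succ (N : ℕ) (c m : ℤ) : evenGaussCoeff (N + 1) c m =
    evenGaussCoeff N c m + evenGaussCoeff N (c - 1) (m - 2 * (N + 1 - c)) := rfl

theorem evenGaussCoeff_eq_zero (N : ℕ) {c m : ℤ} (h : c < 0 ∨ N < c ∨ m < 0) :
    evenGaussCoeff N c m = 0 := by
  induction N generalizing c m with
  | zero => simp only [evenGaussCoeff]; split_ifs <;> omega
  | succ N ih => rw [evenGaussCoeff_succ, ih (by omega), ih (by omega)]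

theorem evenGaussCoeff_zero_right (N : ℕ) (m : ℤ) :
    evenGaussCoeff N 0 m = if m = 0 then 1 else 0 := by
  induction N with
  | zero => simp [evenGaussCoeff]
  | succ N ih => rw [evenGaussCoeff_succ, ih, evenGaussCoeff_eq_zero N (by omega), add_zero]

theorem evenGaussCoeff_succ' (N : ℕ) (c m : ℤ) : evenGaussCoeff (N + 1) c m =
    evenGaussCoeff N (c - 1) m + evenGaussCoeff N c (m - 2 * c) := by
  induction N generalizing c m with
  | zero => simp only [evenGaussCoeff]; split_ifs <;> omega
  | succ N ih =>
    rw [evenGaussCoeff_succ (N + 1), ih, ih, evenGaussCoeff_succ N (c - 1), evenGaussCoeff_succ N c]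
    push_cast
    ring_nf

theorem evenGaussCoeff_symm (N : ℕ) (c m : ℤ) :
    evenGaussCoeff N (N - c) m = evenGaussCoeff N c m := by
  induction N generalizing c m with
  | zero => simp only [evenGaussCoeff]; split_ifs <;> omega
  | succ N ih =>
    rw [evenGaussCoeff_succ, evenGaussCoeff_succ', ← ih (c - 1), ← ih c]
    push_cast
    ring_nf

theorem isPartitionList_cons {x : ℕ} {t : List ℕ} :
    IsPartitionList (x :: t) ↔ 0 < x ∧ (∀ y ∈ t, y ≤ x) ∧ IsPartitionList t := by
  simp only [IsPartitionList, List.pairwise_cons, List.forall_mem_cons]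
  tauto

theorem isStrictPartition_cons {x : ℕ} {t : List ℕ} :
    IsStrictPartition (x :: t) ↔ 0 < x ∧ (∀ y ∈ t, y < x) ∧ IsStrictPartition t := by
  simp only [IsStrictPartition, List.pairwise_cons, List.forall_mem_cons]
  tauto

def evenPartitions (m : ℤ) : Set (List ℕ) :=
  {L | IsPartitionList L ∧ (∀ x ∈ L, Even x) ∧ (L.sum : ℤ) = m}

def evenBoxPartitions (a b : ℕ) (m : ℤ) : Set (List ℕ) :=
  {L | IsPartitionList L ∧ (∀ x ∈ L, Even x ∧ x ≤ 2 * a) ∧ L.length ≤ b ∧ (L.sum : ℤ) = m}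

theorem evenBoxPartitions_finite (a b : ℕ) (m : ℤ) : (evenBoxPartitions a b m).Finite :=
  (List.finite_setOf_pos_sum_le m.toNat).subset fun _ ⟨hL, _, _, hsum⟩ => ⟨hL.2, by omega⟩

theorem evenPartitions_finite (m : ℤ) : (evenPartitions m).Finite :=
  (List.finite_setOf_pos_sum_le m.toNat).subset fun _ ⟨hL, _, hsum⟩ => ⟨hL.2, by omega⟩

theorem evenPartitions_of_neg {m : ℤ} (hm : m < 0) : evenPartitions m = ∅ :=
  Set.eq_empty_of_forall_notMem fun _ ⟨_, _, hsum⟩ => by omega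

theorem evenBoxPartitions_eq_evenPartitions {a b : ℕ} {m : ℤ} (ha : m ≤ a) (hb : m ≤ b) :
    evenBoxPartitions a b m = evenPartitions m := by
  ext L
  refine ⟨fun ⟨hL, hx, _, hsum⟩ => ⟨hL, fun x h => (hx x h).1, hsum⟩,
    fun ⟨hL, hx, hsum⟩ => ⟨hL, fun x h => ⟨hx x h, ?_⟩, ?_, hsum⟩⟩
  · have := List.le_sum_of_mem h
    omega
  · have := List.length_le_sum_of_one_le L hL.2
    omega

theorem evenBoxPartitions_eq_of_eq_zero {a b : ℕ} (m : ℤ) (h : a = 0 ∨ b = 0) :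
    evenBoxPartitions a b m = if m = 0 then {[]} else ∅ := by
  ext L
  rcases L with _ | ⟨x, t⟩
  · split_ifs <;> simp [evenBoxPartitions, IsPartitionList, eq_comm, *]
  · have : x :: t ∉ evenBoxPartitions a b m := by
      rintro ⟨⟨-, hpos⟩, hx, hlen, -⟩
      have := hpos x List.mem_cons_self
      have := (hx x List.mem_cons_self).2
      simp only [List.length_cons] at hlen
      omega
    split_ifs <;> simpa

theorem evenBoxPartitions_succ_succ (a b : ℕ) (m : ℤ) :
    evenBoxPartitions (a + 1) (b + 1) m = evenBoxPartitions a (b + 1) m ∪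
      List.cons (2 * (a + 1)) '' evenBoxPartitions (a + 1) b (m - 2 * (a + 1)) := by
  ext L
  constructor
  · rintro ⟨hL, hx, hlen, hsum⟩
    rcases L with _ | ⟨x, t⟩
    · exact .inl ⟨hL, by simp, by simp, hsum⟩
    obtain ⟨-, hle, ht⟩ := isPartitionList_cons.1 hL
    simp only [List.length_cons, List.sum_cons, Nat.cast_add] at hlen hsum
    by_cases hxa : x = 2 * (a + 1)
    · refine .inr ⟨t, ⟨ht, fun y hy => hx y (List.mem_cons_of_mem _ hy), by omega, ?_⟩, hxa ▸ rfl⟩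
      omega
    · obtain ⟨k, hk⟩ := (hx x List.mem_cons_self).1
      have hxa : x ≤ 2 * a := by have := (hx x List.mem_cons_self).2; omega
      refine .inl ⟨hL, fun y hy => ⟨(hx y hy).1, ?_⟩, by simpa using hlen, by simpa using hsum⟩
      rcases List.mem_cons.1 hy with rfl | hy
      exacts [hxa, (hle y hy).trans hxa]
  · rintro (⟨hL, hx, hlen, hsum⟩ | ⟨t, ⟨ht, hx, hlen, hsum⟩, rfl⟩)
    · exact ⟨hL, fun y hy => ⟨(hx y hy).1, by have := (hx y hy).2; omega⟩, hlen, hsum⟩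
    · refine ⟨isPartitionList_cons.2 ⟨by omega, fun y hy => (hx y hy).2, ht⟩,
        List.forall_mem_cons.2 ⟨⟨⟨a + 1, by ring⟩, le_rfl⟩, hx⟩, by simpa using hlen, ?_⟩
      simp only [List.sum_cons, Nat.cast_add]
      omega

theorem ncard_evenBoxPartitions (a b : ℕ) (m : ℤ) :
    (evenBoxPartitions a b m).ncard = evenGaussCoeff (a + b) a m := by
  induction a generalizing b m with
  | zero =>
    rw [evenBoxPartitions_eq_of_eq_zero m (.inl rfl), zero_add, Nat.cast_zero,
      evenGaussCoeff_zero_right]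
    split_ifs <;> simp
  | succ a iha =>
    induction b generalizing m with
    | zero =>
      rw [evenBoxPartitions_eq_of_eq_zero m (.inr rfl), add_zero, ← evenGaussCoeff_symm, sub_self,
        evenGaussCoeff_zero_right]
      split_ifs <;> simp
    | succ b ihb =>
      have hdisj : Disjoint (evenBoxPartitions a (b + 1) m)
          (List.cons (2 * (a + 1)) '' evenBoxPartitions (a + 1) b (m - 2 * (a + 1))) := by
        rw [Set.disjoint_left]
        rintro _ ⟨-, hx, -, -⟩ ⟨t, -, rfl⟩
        have := (hx _ List.mem_cons_self).2
        omega
      rw [evenBoxPartitions_succ_succ, Set.ncard_union_eq hdisj (evenBoxPartitions_finite _ _ _)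
        ((evenBoxPartitions_finite _ _ _).image _),
        Set.ncard_image_of_injective _ List.cons_injective, iha, ihb,
        show a + 1 + (b + 1) = a + b + 1 + 1 by ring, evenGaussCoeff_succ']
      push_cast
      ring_nf

theorem evenGaussCoeff_eq_ncard_evenPartitions {N : ℕ} {c m : ℤ} (hc : m ≤ c) (hN : m ≤ N - c) :
    evenGaussCoeff N c m = (evenPartitions m).ncard := by
  rcases lt_or_ge m 0 with hm | hm
  · rw [evenGaussCoeff_eq_zero N (.inr (.inr hm)), evenPartitions_of_neg hm, Set.ncard_empty]
  · lift c to ℕ using by omega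
    obtain ⟨b, rfl⟩ : ∃ b, N = c + b := ⟨N - c, by omega⟩
    push_cast at hN
    rw [← ncard_evenBoxPartitions, evenBoxPartitions_eq_evenPartitions hc (by omega)]

theorem bgRank_nil : bgRank [] = 0 := rfl

theorem bgRank_cons (x : ℕ) (t : List ℕ) :
    bgRank (x :: t) = (if Odd x then 1 else 0) - bgRank t := by
  simp only [bgRank, Finset.card_filter_Icc_one]
  simp only [entry, Nat.add_sub_cancel, List.length_cons, Finset.card_filter,
    Finset.sum_range_succ', List.getD_cons_succ, List.getD_cons_zero]
  simp only [Nat.odd_add_one, Nat.not_odd_iff_even, Nat.not_even_iff_odd,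
    List.getD_eq_getElem?_getD, sum_boole, Nat.cast_id, zero_add, odd_one, true_and, Nat.cast_add,
    Nat.cast_ite, Nat.cast_one, CharP.cast_eq_zero, Nat.even_add_one, false_and,
    ↓reduceIte, add_zero, Nat.not_odd_zero]
  split_ifs <;> ring

def boundedStrictPartitions (N : ℕ) (j n : ℤ) : Set (List ℕ) :=
  {L | IsStrictPartition L ∧ (∀ x ∈ L, x ≤ N) ∧ (L.sum : ℤ) = n ∧ bgRank L = j}

theorem boundedStrictPartitions_finite (N : ℕ) (j n : ℤ) :
    (boundedStrictPartitions N j n).Finite :=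
  (List.finite_setOf_pos_sum_le n.toNat).subset fun _ ⟨hL, _, hsum, _⟩ => ⟨hL.2, by omega⟩

theorem boundedStrictPartitions_zero (j n : ℤ) :
    boundedStrictPartitions 0 j n = if j = 0 ∧ n = 0 then {[]} else ∅ := by
  ext L
  rcases L with _ | ⟨x, t⟩
  · split_ifs <;> simp [boundedStrictPartitions, IsStrictPartition, bgRank_nil, eq_comm, *]
    omega
  · have : x :: t ∉ boundedStrictPartitions 0 j n := by
      rintro ⟨⟨-, hpos⟩, hx, -⟩
      have := hpos x List.mem_cons_self
      have := hx x List.mem_cons_self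
      omega
    split_ifs <;> simpa

theorem boundedStrictPartitions_succ (N : ℕ) (j n : ℤ) :
    boundedStrictPartitions (N + 1) j n = boundedStrictPartitions N j n ∪
      List.cons (N + 1) ''
        boundedStrictPartitions N ((if Odd (N + 1) then 1 else 0) - j) (n - (N + 1)) := by
  ext L
  constructor
  · rintro ⟨hL, hx, hsum, hj⟩
    rcases L with _ | ⟨x, t⟩
    · exact .inl ⟨hL, by simp, hsum, hj⟩
    obtain ⟨-, hlt, ht⟩ := isStrictPartition_cons.1 hL
    simp only [List.sum_cons, Nat.cast_add, bgRank_cons] at hsum hj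
    by_cases hxN : x = N + 1
    · subst hxN
      refine .inr ⟨t, ⟨ht, fun y hy => by have := hlt y hy; omega, by omega, by omega⟩, rfl⟩
    · have hxN : x ≤ N := by have := hx x List.mem_cons_self; omega
      refine .inl ⟨hL, fun y hy => ?_, by simpa using hsum, by rwa [bgRank_cons]⟩
      rcases List.mem_cons.1 hy with rfl | hy
      exacts [hxN, (hlt y hy).le.trans hxN]
  · rintro (⟨hL, hx, hsum, hj⟩ | ⟨t, ⟨ht, hx, hsum, hj⟩, rfl⟩)
    · exact ⟨hL, fun y hy => (hx y hy).trans N.le_succ, hsum, hj⟩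
    · refine ⟨isStrictPartition_cons.2 ⟨N.succ_pos, fun y hy => Nat.lt_succ_of_le (hx y hy), ht⟩,
        List.forall_mem_cons.2 ⟨le_rfl, fun y hy => (hx y hy).trans N.le_succ⟩, ?_, ?_⟩
      · simp only [List.sum_cons, Nat.cast_add]
        omega
      · rw [bgRank_cons, hj]
        ring

theorem ncard_boundedStrictPartitions (N : ℕ) (j n : ℤ) :
    (boundedStrictPartitions N j n).ncard =
      evenGaussCoeff N ((N / 2 : ℕ) + j) (n - j * (2 * j - 1)) := by
  induction N generalizing j n with
  | zero =>
    rw [boundedStrictPartitions_zero, Nat.zero_div, Nat.cast_zero, zero_add, evenGaussCoeff]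
    rcases eq_or_ne j 0 with rfl | hj
    · split_ifs <;> simp_all
    · simp [hj]
  | succ N ih =>
    have hdisj (j' : ℤ) : Disjoint (boundedStrictPartitions N j n)
        (List.cons (N + 1) '' boundedStrictPartitions N j' (n - (N + 1))) := by
      rw [Set.disjoint_left]
      rintro _ ⟨-, hx, -⟩ ⟨t, -, rfl⟩
      have := hx _ List.mem_cons_self
      omega
    rw [boundedStrictPartitions_succ, Set.ncard_union_eq (hdisj _)
      (boundedStrictPartitions_finite _ _ _) ((boundedStrictPartitions_finite _ _ _).image _),
      Set.ncard_image_of_injective _ List.cons_injective, ih, ih]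
    rcases Nat.even_or_odd' N with ⟨h, rfl | rfl⟩
    · rw [if_pos (by simp), show (2 * h + 1) / 2 = h by omega, show 2 * h / 2 = h by omega,
        evenGaussCoeff_succ (2 * h), ← evenGaussCoeff_symm (2 * h) (h + (1 - j))]
      congr 2 <;> push_cast <;> ring
    · rw [if_neg (by simp [parity_simps]), show (2 * h + 1 + 1) / 2 = h + 1 by omega,
        show (2 * h + 1) / 2 = h by omega, evenGaussCoeff_succ' (2 * h + 1),
        ← evenGaussCoeff_symm (2 * h + 1) (h + (0 - j))]
      congr 2 <;> push_cast <;> ring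

theorem qj_eq_ncard_evenPartitions (j : ℤ) (n : ℕ) :
    qj j n = (evenPartitions (n - j * (2 * j - 1))).ncard := by
  have hbounded : {L | IsStrictPartition L ∧ L.sum = n ∧ bgRank L = j} =
      boundedStrictPartitions (2 * n) j n := by
    ext L
    constructor
    · rintro ⟨hL, hsum, hj⟩
      exact ⟨hL, fun x hx => by have := List.le_sum_of_mem hx; omega, by omega, hj⟩
    · rintro ⟨hL, -, hsum, hj⟩
      exact ⟨hL, by omega, hj⟩
  have := Int.le_self_sq j
  rw [qj, hbounded, ncard_boundedStrictPartitions, show 2 * n / 2 = n by omega]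
  exact evenGaussCoeff_eq_ncard_evenPartitions (by nlinarith) (by push_cast; nlinarith)

def triangularIndex : ℤ ≃ ℕ := (Equiv.neg ℤ).trans Equiv.intEquivNat

theorem triangularIndex_triangle (j : ℤ) :
    ((triangularIndex j * (triangularIndex j + 1) / 2 : ℕ) : ℤ) = j * (2 * j - 1) := by
  obtain ⟨i, rfl⟩ : ∃ i, j = -i := ⟨-j, by ring⟩
  rw [triangularIndex, Equiv.trans_apply, Equiv.neg_apply, neg_neg]
  cases i with
  | ofNat a =>
    rw [show Equiv.intEquivNat (Int.ofNat a) = 2 * a from rfl,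
      Nat.div_eq_of_eq_mul_left two_pos (show 2 * a * (2 * a + 1) = a * (2 * a + 1) * 2 by ring)]
    push_cast [Int.ofNat_eq_natCast]
    ring
  | negSucc a =>
    rw [show Equiv.intEquivNat (Int.negSucc a) = 2 * a + 1 from rfl,
      Nat.div_eq_of_eq_mul_left two_pos
        (show (2 * a + 1) * (2 * a + 1 + 1) = (2 * a + 1) * (a + 1) * 2 by ring)]
    push_cast [Int.negSucc_eq]
    ring

def triangularEvenPairs (n : ℕ) : Set (ℕ × List ℕ) :=
  {p | IsPartitionList p.2 ∧ (∀ x ∈ p.2, Even x) ∧ p.1 * (p.1 + 1) / 2 + p.2.sum = n}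

theorem sep_triangularEvenPairs_fst_eq (n k : ℕ) :
    {p ∈ triangularEvenPairs n | p.1 = k} =
      Prod.mk k '' evenPartitions (n - (k * (k + 1) / 2 : ℕ)) := by
  ext ⟨k', μ⟩
  simp only [triangularEvenPairs, evenPartitions, Set.mem_ofPred_eq, Set.mem_image, Prod.mk.injEq]
  constructor
  · rintro ⟨⟨hμ, heven, hsum⟩, rfl⟩
    exact ⟨μ, ⟨hμ, heven, by omega⟩, rfl, rfl⟩
  · rintro ⟨μ, ⟨hμ, heven, hsum⟩, rfl, rfl⟩
    exact ⟨⟨hμ, heven, by omega⟩, rfl⟩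

/-- Corollary 3.6 (Vandervelde): the number of strict partitions of `n` equals the number
of pairs `(k, μ)` where `μ` is a partition into even parts and `k(k+1)/2 + |μ| = n`,
i.e. partitions of `n` into even parts together with precisely one triangular part. -/
theorem strict_eq_even_plus_triangular (n : ℕ) :
    Set.ncard {L : List ℕ | IsStrictPartition L ∧ L.sum = n} =
    Set.ncard {p : ℕ × List ℕ | IsPartitionList p.2 ∧ (∀ x ∈ p.2, Even x) ∧
      p.1 * (p.1 + 1) / 2 + p.2.sum = n} := by
  change _ = (triangularEvenPairs n).ncard
  have fiber_eq (j : ℤ) : {p ∈ triangularEvenPairs n | triangularIndex.symm p.1 = j} =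
      Prod.mk (triangularIndex j) '' evenPartitions (n - j * (2 * j - 1)) := by
    simp only [Equiv.symm_apply_eq]
    rw [sep_triangularEvenPairs_fst_eq, triangularIndex_triangle]
  refine Set.ncard_eq_of_ncard_fiber_eq (f := bgRank) (g := fun p => triangularIndex.symm p.1)
    (fun j => ?_) (fun j => ?_) (fun j => ?_)
  · exact (List.finite_setOf_pos_sum_le n).subset fun L ⟨⟨hL, hsum⟩, _⟩ => ⟨hL.2, hsum.le⟩
  · rw [fiber_eq]
    exact (evenPartitions_finite _).image _
  · rw [fiber_eq, Set.ncard_image_of_injective _ (Prod.mk_right_injective _),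
      ← qj_eq_ncard_evenPartitions, qj]
    simp only [Set.sep_ofPred, and_assoc]
end
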